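/- Circular increase-rate comparison: fix k, p ∈ ℤ_k, i ∈ ℤ_k, and let γ = ⌈((i − p) mod k)/(α − 1)⌉ with α > 1. For any s ∈ ℤ_k with (s − i) mod k ≥ γ and s in the cyclic interval [i + γ, p − 1], we have (s − p) mod k ≤ α · ((s − i) mod k). -/

import Mathlib

/-!
Reduction mod `k` is subadditive on residues, so `(s − p) mod k ≤ (s − i) mod k + (i − p) mod k`;
the ceiling gives `(i − p) mod k ≤ (α − 1) γ ≤ (α − 1) · ((s − i) mod k)`.
-/

theorem Int.emod_le_self_of_nonneg {n : ℤ} (hn : 0 ≤ n) (k : ℤ) : n % k ≤ n := by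
  rcases eq_or_ne k 0 with rfl | hk
  · simp
  rw [← Int.emod_abs]
  rcases lt_or_ge n |k| with h | h
  · rw [Int.emod_eq_of_lt hn h]
  · exact (Int.emod_lt_of_pos n (abs_pos.mpr hk)).le.trans h

theorem Int.emod_add_le_emod_add_emod (a b k : ℤ) : (a + b) % k ≤ a % k + b % k := by
  rcases eq_or_ne k 0 with rfl | hk
  · simp
  rw [Int.add_emod]
  exact Int.emod_le_self_of_nonneg (add_nonneg (Int.emod_nonneg a hk) (Int.emod_nonneg b hk)) k

theorem le_mul_ceil_div (x : ℝ) {β : ℝ} (hβ : 0 < β) : x ≤ β * ⌈x / β⌉ :=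
  (div_le_iff₀' hβ).mp (Int.le_ceil _)

theorem circular_rate_comparison_general (k : ℤ) (α : ℝ) (hα : 1 < α)
    (p i s : ℤ) (γ : ℤ)
    (hγ : γ = ⌈(((i - p) % k : ℤ) : ℝ) / (α - 1)⌉)
    (h1 : γ ≤ (s - i) % k) :
    (((s - p) % k : ℤ) : ℝ) ≤ α * (((s - i) % k : ℤ) : ℝ) := by
  have hsub : (s - p) % k ≤ (s - i) % k + (i - p) % k := by
    simpa using Int.emod_add_le_emod_add_emod (s - i) (i - p) k
  have hceil : (((i - p) % k : ℤ) : ℝ) ≤ (α - 1) * γ := hγ ▸ le_mul_ceil_div _ (by linarith)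
  have hγ_le : (γ : ℝ) ≤ ((s - i) % k : ℤ) := mod_cast h1
  calc (((s - p) % k : ℤ) : ℝ) ≤ ((s - i) % k : ℤ) + ((i - p) % k : ℤ) := mod_cast hsub
    _ ≤ ((s - i) % k : ℤ) + (α - 1) * γ := by gcongr
    _ ≤ ((s - i) % k : ℤ) + (α - 1) * ((s - i) % k : ℤ) := by gcongr
    _ = α * ((s - i) % k : ℤ) := by ring

/-- circular increase-rate comparison. With
`γ = ⌈((i − p) mod k)/(α − 1)⌉`, if `(s − i) mod k ≥ γ` and `s̄` lies in the
cyclic interval `⟦i + γ, p − 1⟧`, then `(s − p) mod k ≤ α · ((s − i) mod k)`. -/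
theorem circular_rate_comparison (k : ℤ) (hk : 0 < k) (α : ℝ) (hα : 1 < α)
    (p i s : ℤ) (γ : ℤ)
    (hγ : γ = ⌈(((i - p) % k : ℤ) : ℝ) / (α - 1)⌉)
    (h1 : γ ≤ (s - i) % k)
    (h2 : if (i + γ) % k ≤ (p - 1) % k
      then (i + γ) % k ≤ s % k ∧ s % k ≤ (p - 1) % k
      else s % k ≤ (p - 1) % k ∨ (i + γ) % k ≤ s % k) :
    (((s - p) % k : ℤ) : ℝ) ≤ α * (((s - i) % k : ℤ) : ℝ) :=
  circular_rate_comparison_general k α hα p i s γ hγ h1
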